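/- arXiv:2109.12444 — 7 statements merged into one kernel-verified Lean document; each statement's English description precedes it below -/
import Mathlib

section
/- Let L be a Lie hyperalgebra over a hyperfield F, ρ a strongly regular equivalence relation on L, and δ a strongly regular equivalence relation on F. Then the quotient L/ρ, with operations x̄ ⊕ ȳ := z̄ for any z ∈ x + y, λ̃ ⊙ x̄ := z̄ for any z ∈ λ·x, and ⌊x̄, ȳ⌋ := z̄ for any z ∈ [x,y], is a well-defined Lie algebra over the field F/δ. -/
def ext2 {α : Type*} (f : α → α → Set α) (A B : Set α) : Set α :=
  ⋃ a ∈ A, ⋃ b ∈ B, f a b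

def IsSemihypergroup {α : Type*} (f : α → α → Set α) : Prop :=
  (∀ a b, (f a b).Nonempty) ∧ ∀ a b c, ext2 f (f a b) {c} = ext2 f {a} (f b c)

def IsHypergroup {α : Type*} (f : α → α → Set α) : Prop :=
  IsSemihypergroup f ∧ ∀ a, (⋃ b, f a b) = Set.univ ∧ (⋃ b, f b a) = Set.univ

structure LieHyperalgebra (F : Type*) (L : Type*) where
  fadd : F → F → Set F
  fmul : F → F → Set F
  fzero : F
  fone : F
  add : L → L → Set L
  smul : F → L → Set L
  zero : L
  bracket : L → L → Set L
  fadd_hypergroup : IsHypergroup fadd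
  fmul_semihypergroup : IsSemihypergroup fmul
  fmul_repro : ∀ a, a ≠ fzero → ∀ c, c ≠ fzero → (∃ b, c ∈ fmul a b) ∧ (∃ b, c ∈ fmul b a)
  fdistrib_left : ∀ a b c, (⋃ x ∈ fadd b c, fmul a x) = ext2 fadd (fmul a b) (fmul a c)
  fdistrib_right : ∀ a b c, (⋃ x ∈ fadd a b, fmul x c) = ext2 fadd (fmul a c) (fmul b c)
  add_hypergroup : IsHypergroup add
  smul_add : ∀ (a : F) (x y : L), (⋃ z ∈ add x y, smul a z) = ext2 add (smul a x) (smul a y)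
  add_smul : ∀ (a b : F) (x : L), (⋃ c ∈ fadd a b, smul c x) = ext2 add (smul a x) (smul b x)
  mul_smul : ∀ (a b : F) (x : L), (⋃ c ∈ fmul a b, smul c x) = ⋃ y ∈ smul b x, smul a y
  zero_smul : ∀ x, smul fzero x = {zero}
  one_smul : ∀ x, smul fone x = {x}
  bracket_bilin_left : ∀ (l1 l2 : F) (x1 x2 y : L),
    ext2 bracket (ext2 add (smul l1 x1) (smul l2 x2)) {y}
      = ext2 add (⋃ z ∈ bracket x1 y, smul l1 z) (⋃ z ∈ bracket x2 y, smul l2 z)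
  bracket_bilin_right : ∀ (l1 l2 : F) (x y1 y2 : L),
    ext2 bracket {x} (ext2 add (smul l1 y1) (smul l2 y2))
      = ext2 add (⋃ z ∈ bracket x y1, smul l1 z) (⋃ z ∈ bracket x y2, smul l2 z)
  bracket_refl : ∀ x, zero ∈ bracket x x
  jacobi : ∀ x y z, zero ∈ ext2 add
    (ext2 add (ext2 bracket {x} (bracket y z)) (ext2 bracket {y} (bracket z x)))
    (ext2 bracket {z} (bracket x y))

/-- Hypersum `A 0 + A 1 + ⋯ + A t` of finitely many sets w.r.t. a hyperoperation. -/
def hsumSet {α : Type*} (f : α → α → Set α) : ∀ {t : ℕ}, (Fin (t + 1) → Set α) → Set α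
  | 0, A => A 0
  | _ + 1, A => ext2 f (A 0) (hsumSet f (A ∘ Fin.succ))

/-- Hyperproduct `lam 0 · lam 1 ⋯ · lam q` of finitely many elements. -/
def hprod {α : Type*} (f : α → α → Set α) : ∀ {q : ℕ}, (Fin (q + 1) → α) → Set α
  | 0, lam => {lam 0}
  | _ + 1, lam => ext2 f {lam 0} (hprod f (lam ∘ Fin.succ))

/-- Formal hyperbracket expressions in `m` variables: arbitrary compositions of the
arguments using only the hyperbracket. -/
inductive BExpr : ℕ → Type
  | leaf {m : ℕ} : Fin m → BExpr m
  | br {m : ℕ} : BExpr m → BExpr m → BExpr m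

namespace LieHyperalgebra

variable {F L : Type*} (H : LieHyperalgebra F L)

def derivedSet : ℕ → Set L
  | 0 => Set.univ
  | i + 1 => ext2 H.bracket (derivedSet i) (derivedSet i)

/-- Evaluation of a hyperbracket expression on set-valued arguments. -/
def evalBExpr : ∀ {m : ℕ}, BExpr m → (Fin m → Set L) → Set L
  | _, .leaf j, g => g j
  | _, .br e₁ e₂, g => ext2 H.bracket (evalBExpr e₁ g) (evalBExpr e₂ g)

/-- The data occurring in the definition of the relation `𝒮ₙ`. -/
structure SData (n : ℕ) where
  t : ℕ
  σ : Equiv.Perm (Fin (t + 1))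
  m : Fin (t + 1) → ℕ
  f : ∀ i, BExpr (m i + 1)
  h : ∀ i, Fin (m i + 1) → L
  p : ∀ i, Fin (m i + 1) → ℕ
  q : ∀ i j, Fin (p i j + 1) → ℕ
  lam : ∀ i j k, Fin (q i j k + 1) → F
  σi : ∀ i, Equiv.Perm (Fin (m i + 1))
  σi_fix : ∀ i j, h i j ∉ H.derivedSet (n - 1) → σi i j = j
  σij : ∀ i j, Equiv.Perm (Fin (p i j + 1))
  σijk : ∀ i j k, Equiv.Perm (Fin (q i j k + 1))

namespace SData

variable {H} {n : ℕ} (d : SData H n)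

/-- `g_{ij} = (Σ_k Π_r λ_{ijkr}) · h_{ij}`. -/
def g (i : Fin (d.t + 1)) (j : Fin (d.m i + 1)) : Set L :=
  ⋃ c ∈ hsumSet H.fadd (fun k => hprod H.fmul (d.lam i j k)), H.smul c (d.h i j)

/-- `A_{ij} = Σ_k B_{ij σ_{ij}(k)}` with `B_{ijk} = Π_r λ_{ijk σ_{ijk}(r)}`. -/
def A (i : Fin (d.t + 1)) (j : Fin (d.m i + 1)) : Set F :=
  hsumSet H.fadd (fun k =>
    hprod H.fmul (fun r => d.lam i j (d.σij i j k) (d.σijk i j (d.σij i j k) r)))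

/-- `g'_{ij} = A_{σ(i) σ_{σ(i)}(j)} · h_{σ(i) σ_{σ(i)}(j)}`. -/
def g' (i : Fin (d.t + 1)) (j : Fin (d.m (d.σ i) + 1)) : Set L :=
  ⋃ c ∈ d.A (d.σ i) (d.σi (d.σ i) j), H.smul c (d.h (d.σ i) (d.σi (d.σ i) j))

/-- `Σ_i ℓ_i` where `ℓ_i = f_i(g_{i1},…,g_{im_i})`. -/
def lhs : Set L := hsumSet H.add (fun i => H.evalBExpr (d.f i) (d.g i))

/-- `Σ_i ℓ'_i` where `ℓ'_i = f_{σ(i)}(g'_{i1},…,g'_{im_{σ(i)}})`. -/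
def rhs : Set L := hsumSet H.add (fun i => H.evalBExpr (d.f (d.σ i)) (d.g' i))

end SData

/-- The relation `𝒮ₙ` on a Lie hyperalgebra. -/
def SRel (n : ℕ) (x y : L) : Prop := ∃ d : SData H n, x ∈ d.lhs ∧ y ∈ d.rhs

/-- Data for the relation `𝒜` (no restriction on the permutations `σᵢ`). -/
structure AData (F L : Type*) where
  t : ℕ
  σ : Equiv.Perm (Fin (t + 1))
  m : Fin (t + 1) → ℕ
  f : ∀ i, BExpr (m i + 1)
  h : ∀ i, Fin (m i + 1) → L
  p : ∀ i, Fin (m i + 1) → ℕ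
  q : ∀ i j, Fin (p i j + 1) → ℕ
  lam : ∀ i j k, Fin (q i j k + 1) → F
  σi : ∀ i, Equiv.Perm (Fin (m i + 1))
  σij : ∀ i j, Equiv.Perm (Fin (p i j + 1))
  σijk : ∀ i j k, Equiv.Perm (Fin (q i j k + 1))

variable {H}

def aG (d : AData F L) (i : Fin (d.t + 1)) (j : Fin (d.m i + 1)) : Set L :=
  ⋃ c ∈ hsumSet H.fadd (fun k => hprod H.fmul (d.lam i j k)), H.smul c (d.h i j)

def aA (d : AData F L) (i : Fin (d.t + 1)) (j : Fin (d.m i + 1)) : Set F :=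
  hsumSet H.fadd (fun k =>
    hprod H.fmul (fun r => d.lam i j (d.σij i j k) (d.σijk i j (d.σij i j k) r)))

def aG' (d : AData F L) (i : Fin (d.t + 1)) (j : Fin (d.m (d.σ i) + 1)) : Set L :=
  ⋃ c ∈ aA (H := H) d (d.σ i) (d.σi (d.σ i) j), H.smul c (d.h (d.σ i) (d.σi (d.σ i) j))

def aLhs (d : AData F L) : Set L :=
  hsumSet H.add (fun i => H.evalBExpr (d.f i) (aG (H := H) d i))

def aRhs (d : AData F L) : Set L :=
  hsumSet H.add (fun i => H.evalBExpr (d.f (d.σ i)) (aG' (H := H) d i))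

variable (H)

/-- The relation `𝒜` on a Lie hyperalgebra. -/
def ARel (x y : L) : Prop :=
  ∃ d : AData F L, x ∈ aLhs (H := H) d ∧ y ∈ aRhs (H := H) d

/-- Data for the fundamental relation `ℒ`. -/
structure LData (F L : Type*) where
  t : ℕ
  m : Fin (t + 1) → ℕ
  f : ∀ i, BExpr (m i + 1)
  h : ∀ i, Fin (m i + 1) → L
  p : ∀ i, Fin (m i + 1) → ℕ
  q : ∀ i j, Fin (p i j + 1) → ℕ
  lam : ∀ i j k, Fin (q i j k + 1) → F

variable {H}

def lG (d : LData F L) (i : Fin (d.t + 1)) (j : Fin (d.m i + 1)) : Set L :=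
  ⋃ c ∈ hsumSet H.fadd (fun k => hprod H.fmul (d.lam i j k)), H.smul c (d.h i j)

def lLhs (d : LData F L) : Set L :=
  hsumSet H.add (fun i => H.evalBExpr (d.f i) (lG (H := H) d i))

variable (H)

/-- The fundamental relation `ℒ`: `x ℒ y` iff `{x,y} ⊆ Σ ℓᵢ`. -/
def LRel (x y : L) : Prop := ∃ d : LData F L, x ∈ lLhs (H := H) d ∧ y ∈ lLhs (H := H) d

/-- Data for the relation `α` on the hyperfield `F`. -/
structure AlphaData (F : Type*) where
  t : ℕ
  σ : Equiv.Perm (Fin (t + 1))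
  k : Fin (t + 1) → ℕ
  σi : ∀ i, Equiv.Perm (Fin (k i + 1))
  xs : ∀ i, Fin (k i + 1) → F

/-- The relation `α` on the hyperfield `F`. -/
def alphaRel (a b : F) : Prop :=
  ∃ d : AlphaData F,
    a ∈ hsumSet H.fadd (fun i => hprod H.fmul (d.xs i)) ∧
    b ∈ hsumSet H.fadd (fun i => hprod H.fmul (fun j => d.xs (d.σ i) (d.σi (d.σ i) j)))

/-- `A ρ̄̄ B` : every element of `A` is related to every element of `B`. -/
def SetRel {α : Type*} (ρ : α → α → Prop) (A B : Set α) : Prop :=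
  ∀ a ∈ A, ∀ b ∈ B, ρ a b

/-- A strongly regular relation on a Lie hyperalgebra. -/
structure IsStronglyRegular (ρ : L → L → Prop) : Prop where
  add_left : ∀ x y a, ρ x y → SetRel ρ (H.add a x) (H.add a y)
  add_right : ∀ x y a, ρ x y → SetRel ρ (H.add x a) (H.add y a)
  smul : ∀ x y (c : F), ρ x y → SetRel ρ (H.smul c x) (H.smul c y)
  bracket_left : ∀ x y a, ρ x y → SetRel ρ (H.bracket a x) (H.bracket a y)
  bracket_right : ∀ x y a, ρ x y → SetRel ρ (H.bracket x a) (H.bracket y a)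

/-- A strongly regular relation on the hyperfield `F`. -/
structure IsStronglyRegularF (δ : F → F → Prop) : Prop where
  add_left : ∀ x y a, δ x y → SetRel δ (H.fadd a x) (H.fadd a y)
  add_right : ∀ x y a, δ x y → SetRel δ (H.fadd x a) (H.fadd y a)
  mul_left : ∀ x y a, δ x y → SetRel δ (H.fmul a x) (H.fmul a y)
  mul_right : ∀ x y a, δ x y → SetRel δ (H.fmul x a) (H.fmul y a)

end LieHyperalgebra


/-- The data of an induced Lie algebra structure on quotients `QF` of the hyperfield
and `QL` of the Lie hyperalgebra: well-defined single-valued operations induced by the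
hyperoperations (`x̄ ⊕ ȳ = z̄` for ANY `z ∈ x + y`, etc.) forming a Lie algebra. -/
structure QuotLieAlgebraWitness {F L : Type*} (H : LieHyperalgebra F L)
    (QF QL : Type*) (mkF : F → QF) (mkL : L → QL) [fieldQ : Field QF] where
  [lieRing : LieRing QL]
  [module : Module QF QL]
  [lieAlg : LieAlgebra QF QL]
  add_eq : ∀ x y : L, ∀ z ∈ H.add x y, mkL x + mkL y = mkL z
  smul_eq : ∀ (a : F) (x : L), ∀ z ∈ H.smul a x, mkF a • mkL x = mkL z
  bracket_eq : ∀ x y : L, ∀ z ∈ H.bracket x y, ⁅mkL x, mkL y⁆ = mkL z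


/-!
Strong regularity makes any two elements of `x + y`, `λ · x` or `[x, y]` ρ-related as soon as the
arguments are, so every hyperoperation descends to a single-valued operation on `L/ρ`. The
hypergroup axioms make `L/ρ` a semigroup in which `a + x = b` and `y + a = b` are solvable, hence a
group, and expanding `(1 + 1)(x + y)` in two ways shows that it is abelian. The delicate point is
that the action of `λ ∈ F` on `L/ρ` only depends on the class of `λ` in the field `F/δ`, since
nothing is assumed about the zero of `F` beyond `0 · x = {0}` and reproducibility: when `L/ρ ≠ 0`,
an element of `F` acting trivially must be `0`, which forces `0` to lie in the zero class of `F/δ`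
and every element of that class to act trivially. The Lie algebra axioms are then the images of
the hyperalgebra axioms.
-/

open LieHyperalgebra

theorem mem_ext2 {α : Type*} {f : α → α → Set α} {A B : Set α} {z : α} :
    z ∈ ext2 f A B ↔ ∃ a ∈ A, ∃ b ∈ B, z ∈ f a b := by
  simp [ext2]

theorem IsHypergroup.exists_mem_right {α : Type*} {f : α → α → Set α} (hf : IsHypergroup f)
    (a c : α) : ∃ b, c ∈ f a b :=
  Set.mem_iUnion.mp ((hf.2 a).1 ▸ Set.mem_univ c)

theorem IsHypergroup.exists_mem_left {α : Type*} {f : α → α → Set α} (hf : IsHypergroup f)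
    (a c : α) : ∃ b, c ∈ f b a :=
  Set.mem_iUnion.mp ((hf.2 a).2 ▸ Set.mem_univ c)

namespace Quot

variable {α β γ : Type*} {r : α → α → Prop} {s : β → β → Prop} {t : γ → γ → Prop}

noncomputable def liftSet (f : α → Set γ) (hf : ∀ a, (f a).Nonempty)
    (h : ∀ a₁ a₂, r a₁ a₂ → SetRel t (f a₁) (f a₂)) : Quot r → Quot t :=
  Quot.lift (fun a => Quot.mk t (hf a).some) fun a₁ a₂ ha =>
    Quot.sound (h a₁ a₂ ha _ (hf a₁).some_mem _ (hf a₂).some_mem)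

theorem liftSet_mk {f : α → Set γ} {hf : ∀ a, (f a).Nonempty}
    {h : ∀ a₁ a₂, r a₁ a₂ → SetRel t (f a₁) (f a₂)} {a : α} {c : γ} (hr : r a a) (hc : c ∈ f a) :
    liftSet f hf h (Quot.mk r a) = Quot.mk t c :=
  Quot.sound (h a a hr _ (hf a).some_mem c hc)

noncomputable def liftSet₂ (f : α → β → Set γ) (hf : ∀ a b, (f a b).Nonempty)
    (hs : ∀ a b₁ b₂, s b₁ b₂ → SetRel t (f a b₁) (f a b₂))
    (hr : ∀ a₁ a₂ b, r a₁ a₂ → SetRel t (f a₁ b) (f a₂ b)) : Quot r → Quot s → Quot t :=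
  Quot.lift₂ (fun a b => Quot.mk t (hf a b).some)
    (fun a b₁ b₂ hb => Quot.sound (hs a b₁ b₂ hb _ (hf a b₁).some_mem _ (hf a b₂).some_mem))
    (fun a₁ a₂ b ha => Quot.sound (hr a₁ a₂ b ha _ (hf a₁ b).some_mem _ (hf a₂ b).some_mem))

theorem liftSet₂_mk {f : α → β → Set γ} {hf : ∀ a b, (f a b).Nonempty}
    {hs : ∀ a b₁ b₂, s b₁ b₂ → SetRel t (f a b₁) (f a b₂)}
    {hr : ∀ a₁ a₂ b, r a₁ a₂ → SetRel t (f a₁ b) (f a₂ b)} {a : α} {b : β} {c : γ}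
    (hb : s b b) (hc : c ∈ f a b) :
    liftSet₂ f hf hs hr (Quot.mk r a) (Quot.mk s b) = Quot.mk t c :=
  Quot.sound (hs a b b hb _ (hf a b).some_mem c hc)

end Quot

noncomputable abbrev AddGroup.ofSolvable {G : Type*} [Add G] (g : G)
    (assoc : ∀ a b c : G, a + b + c = a + (b + c))
    (exists_add_eq : ∀ a c : G, ∃ b, a + b = c) (exists_eq_add : ∀ a c : G, ∃ b, b + a = c) :
    AddGroup G :=
  letI : Zero G := ⟨(exists_eq_add g g).choose⟩
  letI : Neg G := ⟨fun a => (exists_eq_add a 0).choose⟩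
  AddGroup.ofLeftAxioms assoc
    (fun a => by
      obtain ⟨b, rfl⟩ := exists_add_eq g a
      rw [← assoc]
      exact congrArg (· + b) (exists_eq_add g g).choose_spec)
    (fun a => (exists_eq_add a 0).choose_spec)

abbrev LieRing.ofJacobi {M : Type*} [AddCommGroup M] [Bracket M M]
    (add_lie : ∀ x y z : M, ⁅x + y, z⁆ = ⁅x, z⁆ + ⁅y, z⁆)
    (lie_add : ∀ x y z : M, ⁅x, y + z⁆ = ⁅x, y⁆ + ⁅x, z⁆)
    (lie_self : ∀ x : M, ⁅x, x⁆ = 0)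
    (jacobi : ∀ x y z : M, ⁅x, ⁅y, z⁆⁆ + ⁅y, ⁅z, x⁆⁆ + ⁅z, ⁅x, y⁆⁆ = 0) : LieRing M where
  add_lie := add_lie
  lie_add := lie_add
  lie_self := lie_self
  leibniz_lie x y z := by
    have lie_skew : ∀ a b : M, ⁅a, b⁆ = -⁅b, a⁆ := fun a b => by
      have h := lie_self (a + b)
      rw [add_lie, lie_add, lie_add, lie_self, lie_self, zero_add, add_zero] at h
      exact eq_neg_of_add_eq_zero_left h
    let lieLeft : M →+ M := AddMonoidHom.mk' (⁅y, ·⁆) (lie_add y)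
    have lie_neg : ⁅y, -⁅z, x⁆⁆ = -⁅y, ⁅z, x⁆⁆ := map_neg lieLeft _
    rw [lie_skew ⁅x, y⁆, lie_skew x z, lie_neg, ← sub_eq_zero, ← jacobi x y z]
    abel

namespace LieHyperalgebra

variable {F L : Type*} (H : LieHyperalgebra F L)

theorem add_nonempty (x y : L) : (H.add x y).Nonempty := H.add_hypergroup.1.1 x y

theorem fadd_nonempty (a b : F) : (H.fadd a b).Nonempty := H.fadd_hypergroup.1.1 a b

theorem fmul_nonempty (a b : F) : (H.fmul a b).Nonempty := H.fmul_semihypergroup.1 a b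

theorem smul_nonempty (a : F) (x : L) : (H.smul a x).Nonempty := by
  obtain ⟨b, hb⟩ := H.fadd_hypergroup.exists_mem_right a H.fone
  have hx : x ∈ ⋃ c ∈ H.fadd a b, H.smul c x := Set.mem_biUnion hb (by simp [H.one_smul])
  rw [H.add_smul] at hx
  obtain ⟨u, hu, -⟩ := mem_ext2.mp hx
  exact ⟨u, hu⟩

theorem bracket_nonempty (x y : L) : (H.bracket x y).Nonempty := by
  obtain ⟨_, hs, -⟩ := mem_ext2.mp (H.jacobi H.zero x y)
  obtain ⟨_, hu, -⟩ := mem_ext2.mp hs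
  obtain ⟨_, -, z, hz, -⟩ := mem_ext2.mp hu
  exact ⟨z, hz⟩

/-- Bundled so that the induced operations on `Quot S.rel` can be instances. -/
structure StronglyRegularEquiv where
  rel : L → L → Prop
  equivalence : Equivalence rel
  isStronglyRegular : H.IsStronglyRegular rel

class IsFieldQuotient (δ : F → F → Prop) [Field (Quot δ)] : Prop where
  mk_add_mk : ∀ a b, ∀ c ∈ H.fadd a b, Quot.mk δ a + Quot.mk δ b = Quot.mk δ c
  mk_mul_mk : ∀ a b, ∀ c ∈ H.fmul a b, Quot.mk δ a * Quot.mk δ b = Quot.mk δ c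

namespace StronglyRegularEquiv

variable {H} (S : H.StronglyRegularEquiv)

noncomputable instance : Add (Quot S.rel) :=
  ⟨Quot.liftSet₂ H.add H.add_nonempty (fun a b₁ b₂ => S.isStronglyRegular.add_left b₁ b₂ a)
    S.isStronglyRegular.add_right⟩

noncomputable instance : Bracket (Quot S.rel) (Quot S.rel) :=
  ⟨Quot.liftSet₂ H.bracket H.bracket_nonempty
    (fun a b₁ b₂ => S.isStronglyRegular.bracket_left b₁ b₂ a) S.isStronglyRegular.bracket_right⟩

noncomputable instance : SMul F (Quot S.rel) :=
  ⟨fun a => Quot.liftSet (H.smul a) (H.smul_nonempty a) fun x y => S.isStronglyRegular.smul x y a⟩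

variable {S} {x y z : L} {a : F}

theorem mk_add_mk (hz : z ∈ H.add x y) : Quot.mk S.rel x + Quot.mk S.rel y = Quot.mk S.rel z :=
  Quot.liftSet₂_mk (S.equivalence.refl y) hz

theorem mk_lie_mk (hz : z ∈ H.bracket x y) :
    ⁅Quot.mk S.rel x, Quot.mk S.rel y⁆ = Quot.mk S.rel z :=
  Quot.liftSet₂_mk (S.equivalence.refl y) hz

theorem smul_mk (hz : z ∈ H.smul a x) : a • Quot.mk S.rel x = Quot.mk S.rel z :=
  Quot.liftSet_mk (S.equivalence.refl x) hz

variable (S)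

protected theorem add_assoc (u v w : Quot S.rel) : u + v + w = u + (v + w) := by
  induction u using Quot.ind with | _ x =>
  induction v using Quot.ind with | _ y =>
  induction w using Quot.ind with | _ z =>
  obtain ⟨s, hs⟩ := H.add_nonempty x y
  obtain ⟨t, ht⟩ := H.add_nonempty s z
  have ht' : t ∈ ext2 H.add {x} (H.add y z) := by
    rw [← H.add_hypergroup.1.2]
    exact mem_ext2.mpr ⟨s, hs, z, rfl, ht⟩
  obtain ⟨_, rfl, s', hs', ht'⟩ := mem_ext2.mp ht'
  rw [mk_add_mk hs, mk_add_mk ht, mk_add_mk hs', mk_add_mk ht']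

theorem exists_add_eq (u w : Quot S.rel) : ∃ v, u + v = w := by
  induction u using Quot.ind with | _ x =>
  induction w using Quot.ind with | _ z =>
  obtain ⟨y, hy⟩ := H.add_hypergroup.exists_mem_right x z
  exact ⟨Quot.mk S.rel y, mk_add_mk hy⟩

theorem exists_eq_add (u w : Quot S.rel) : ∃ v, v + u = w := by
  induction u using Quot.ind with | _ x =>
  induction w using Quot.ind with | _ z =>
  obtain ⟨y, hy⟩ := H.add_hypergroup.exists_mem_left x z
  exact ⟨Quot.mk S.rel y, mk_add_mk hy⟩

noncomputable instance : AddGroup (Quot S.rel) :=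
  AddGroup.ofSolvable (Quot.mk S.rel H.zero) S.add_assoc S.exists_add_eq S.exists_eq_add

protected theorem smul_add (a : F) (u v : Quot S.rel) : a • (u + v) = a • u + a • v := by
  induction u using Quot.ind with | _ x =>
  induction v using Quot.ind with | _ y =>
  obtain ⟨s, hs⟩ := H.add_nonempty x y
  obtain ⟨t, ht⟩ := H.smul_nonempty a s
  have ht' : t ∈ ext2 H.add (H.smul a x) (H.smul a y) := by
    rw [← H.smul_add]
    exact Set.mem_biUnion hs ht
  obtain ⟨p, hp, q, hq, ht'⟩ := mem_ext2.mp ht'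
  rw [mk_add_mk hs, smul_mk ht, smul_mk hp, smul_mk hq, mk_add_mk ht']

theorem add_smul_of_mem {a b c : F} (hc : c ∈ H.fadd a b) (u : Quot S.rel) :
    c • u = a • u + b • u := by
  induction u using Quot.ind with | _ x =>
  obtain ⟨t, ht⟩ := H.smul_nonempty c x
  have ht' : t ∈ ext2 H.add (H.smul a x) (H.smul b x) := by
    rw [← H.add_smul]
    exact Set.mem_biUnion hc ht
  obtain ⟨p, hp, q, hq, ht'⟩ := mem_ext2.mp ht'
  rw [smul_mk ht, smul_mk hp, smul_mk hq, mk_add_mk ht']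

theorem mul_smul_of_mem {a b c : F} (hc : c ∈ H.fmul a b) (u : Quot S.rel) :
    c • u = a • b • u := by
  induction u using Quot.ind with | _ x =>
  obtain ⟨t, ht⟩ := H.smul_nonempty c x
  have ht' : t ∈ ⋃ y ∈ H.smul b x, H.smul a y := by
    rw [← H.mul_smul]
    exact Set.mem_biUnion hc ht
  obtain ⟨y, hy, ht'⟩ := Set.mem_iUnion₂.mp ht'
  rw [smul_mk ht, smul_mk hy, smul_mk ht']

theorem fone_smul (u : Quot S.rel) : H.fone • u = u := by
  induction u using Quot.ind with | _ x =>
  exact smul_mk (by simp [H.one_smul])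

theorem fzero_smul_eq_mk_zero (u : Quot S.rel) : H.fzero • u = Quot.mk S.rel H.zero := by
  induction u using Quot.ind with | _ x =>
  exact smul_mk (by simp [H.zero_smul])

theorem mk_zero : Quot.mk S.rel H.zero = 0 := by
  have h := S.smul_add H.fzero 0 0
  rwa [add_zero, S.fzero_smul_eq_mk_zero, left_eq_add] at h

theorem fzero_smul (u : Quot S.rel) : H.fzero • u = 0 := by
  rw [fzero_smul_eq_mk_zero, mk_zero]

protected theorem add_comm (u v : Quot S.rel) : u + v = v + u := by
  obtain ⟨c, hc⟩ := H.fadd_nonempty H.fone H.fone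
  have h : u + u + (v + v) = u + v + (u + v) := calc
    u + u + (v + v) = c • u + c • v := by
      rw [S.add_smul_of_mem hc, S.add_smul_of_mem hc, S.fone_smul, S.fone_smul]
    _ = c • (u + v) := (S.smul_add c u v).symm
    _ = u + v + (u + v) := by rw [S.add_smul_of_mem hc, S.fone_smul]
  rw [add_assoc, add_assoc, add_right_inj, ← add_assoc, ← add_assoc, add_left_inj] at h
  exact h

noncomputable instance : AddCommGroup (Quot S.rel) :=
  { (inferInstance : AddGroup (Quot S.rel)) with add_comm := S.add_comm }

theorem lie_smul_add_smul (a b : F) (u v w : Quot S.rel) :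
    ⁅u, a • v + b • w⁆ = a • ⁅u, v⁆ + b • ⁅u, w⁆ := by
  induction u using Quot.ind with | _ x =>
  induction v using Quot.ind with | _ y₁ =>
  induction w using Quot.ind with | _ y₂ =>
  obtain ⟨p, hp⟩ := H.smul_nonempty a y₁
  obtain ⟨q, hq⟩ := H.smul_nonempty b y₂
  obtain ⟨s, hs⟩ := H.add_nonempty p q
  obtain ⟨t, ht⟩ := H.bracket_nonempty x s
  have ht' : t ∈ ext2 H.add (⋃ z ∈ H.bracket x y₁, H.smul a z)
      (⋃ z ∈ H.bracket x y₂, H.smul b z) := by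
    rw [← H.bracket_bilin_right]
    exact mem_ext2.mpr ⟨x, rfl, s, mem_ext2.mpr ⟨p, hp, q, hq, hs⟩, ht⟩
  obtain ⟨p', hp', q', hq', ht'⟩ := mem_ext2.mp ht'
  obtain ⟨z₁, hz₁, hp'⟩ := Set.mem_iUnion₂.mp hp'
  obtain ⟨z₂, hz₂, hq'⟩ := Set.mem_iUnion₂.mp hq'
  rw [smul_mk hp, smul_mk hq, mk_add_mk hs, mk_lie_mk ht, mk_lie_mk hz₁, mk_lie_mk hz₂,
    smul_mk hp', smul_mk hq', mk_add_mk ht']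

theorem smul_add_smul_lie (a b : F) (u v w : Quot S.rel) :
    ⁅a • u + b • v, w⁆ = a • ⁅u, w⁆ + b • ⁅v, w⁆ := by
  induction u using Quot.ind with | _ x₁ =>
  induction v using Quot.ind with | _ x₂ =>
  induction w using Quot.ind with | _ y =>
  obtain ⟨p, hp⟩ := H.smul_nonempty a x₁
  obtain ⟨q, hq⟩ := H.smul_nonempty b x₂
  obtain ⟨s, hs⟩ := H.add_nonempty p q
  obtain ⟨t, ht⟩ := H.bracket_nonempty s y
  have ht' : t ∈ ext2 H.add (⋃ z ∈ H.bracket x₁ y, H.smul a z)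
      (⋃ z ∈ H.bracket x₂ y, H.smul b z) := by
    rw [← H.bracket_bilin_left]
    exact mem_ext2.mpr ⟨s, mem_ext2.mpr ⟨p, hp, q, hq, hs⟩, y, rfl, ht⟩
  obtain ⟨p', hp', q', hq', ht'⟩ := mem_ext2.mp ht'
  obtain ⟨z₁, hz₁, hp'⟩ := Set.mem_iUnion₂.mp hp'
  obtain ⟨z₂, hz₂, hq'⟩ := Set.mem_iUnion₂.mp hq'
  rw [smul_mk hp, smul_mk hq, mk_add_mk hs, mk_lie_mk ht, mk_lie_mk hz₁, mk_lie_mk hz₂,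
    smul_mk hp', smul_mk hq', mk_add_mk ht']

protected theorem lie_smul (a : F) (u v : Quot S.rel) : ⁅u, a • v⁆ = a • ⁅u, v⁆ := by
  simpa only [fzero_smul, add_zero] using S.lie_smul_add_smul a H.fzero u v v

protected theorem lie_self (u : Quot S.rel) : ⁅u, u⁆ = 0 := by
  induction u using Quot.ind with | _ x =>
  rw [mk_lie_mk (H.bracket_refl x), mk_zero]

protected theorem lie_jacobi (u v w : Quot S.rel) :
    ⁅u, ⁅v, w⁆⁆ + ⁅v, ⁅w, u⁆⁆ + ⁅w, ⁅u, v⁆⁆ = 0 := by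
  induction u using Quot.ind with | _ x =>
  induction v using Quot.ind with | _ y =>
  induction w using Quot.ind with | _ z =>
  obtain ⟨s, hs, t, ht, hst⟩ := mem_ext2.mp (H.jacobi x y z)
  obtain ⟨p, hp, q, hq, hpq⟩ := mem_ext2.mp hs
  obtain ⟨_, rfl, r₁, hr₁, hp₁⟩ := mem_ext2.mp hp
  obtain ⟨_, rfl, r₂, hr₂, hq₂⟩ := mem_ext2.mp hq
  obtain ⟨_, rfl, r₃, hr₃, ht₃⟩ := mem_ext2.mp ht
  rw [mk_lie_mk hr₁, mk_lie_mk hp₁, mk_lie_mk hr₂, mk_lie_mk hq₂, mk_lie_mk hr₃, mk_lie_mk ht₃,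
    mk_add_mk hpq, mk_add_mk hst, mk_zero]

noncomputable instance lieRing : LieRing (Quot S.rel) :=
  LieRing.ofJacobi
    (fun u v w => by simpa only [fone_smul] using S.smul_add_smul_lie H.fone H.fone u v w)
    (fun u v w => by simpa only [fone_smul] using S.lie_smul_add_smul H.fone H.fone u v w)
    S.lie_self S.lie_jacobi

theorem fone_ne_fzero [Nontrivial (Quot S.rel)] : H.fone ≠ H.fzero := by
  intro h
  obtain ⟨u, v, huv⟩ := exists_pair_ne (Quot S.rel)
  rw [← S.fone_smul u, ← S.fone_smul v, h, fzero_smul, fzero_smul] at huv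
  exact huv rfl

theorem eq_fzero_of_smul_eq_zero [Nontrivial (Quot S.rel)] {c : F}
    (hc : ∀ u : Quot S.rel, c • u = 0) : c = H.fzero := by
  by_contra hc0
  obtain ⟨d, hd⟩ := (H.fmul_repro c hc0 H.fone S.fone_ne_fzero).2
  obtain ⟨u, v, huv⟩ := exists_pair_ne (Quot S.rel)
  rw [← S.fone_smul u, ← S.fone_smul v, S.mul_smul_of_mem hd, S.mul_smul_of_mem hd, hc, hc]
    at huv
  exact huv rfl

variable {δ : F → F → Prop} [Field (Quot δ)] [H.IsFieldQuotient δ]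

theorem mk_fzero [Nontrivial (Quot S.rel)] : Quot.mk δ H.fzero = 0 := by
  obtain ⟨c, hc⟩ := H.fadd_nonempty H.fzero H.fzero
  have hc0 : c = H.fzero := S.eq_fzero_of_smul_eq_zero fun u => by
    rw [S.add_smul_of_mem hc, fzero_smul, add_zero]
  have h := IsFieldQuotient.mk_add_mk (δ := δ) _ _ c hc
  rwa [hc0, add_eq_left] at h

theorem smul_eq_zero_of_mk_eq_zero [Nontrivial (Quot S.rel)] {c : F} (hc : Quot.mk δ c = 0)
    (u : Quot S.rel) : c • u = 0 := by
  by_cases hc0 : c = H.fzero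
  · rw [hc0, fzero_smul]
  exfalso
  obtain ⟨d, hd⟩ := (H.fmul_repro c hc0 H.fone S.fone_ne_fzero).2
  have hone : Quot.mk δ H.fone = 0 := by
    rw [← IsFieldQuotient.mk_mul_mk (δ := δ) _ _ _ hd, hc, mul_zero]
  -- `w` of class `1` lies in `e + y` with `e ∈ w · 1`, which acts as `w` does but has class `0`:
  -- so `y` acts trivially, hence `y = 0` and `w` has class `0` after all
  obtain ⟨w, hw⟩ := Quot.exists_rep (1 : Quot δ)
  obtain ⟨e, he⟩ := H.fmul_nonempty w H.fone
  obtain ⟨y, hy⟩ := H.fadd_hypergroup.exists_mem_right e w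
  have hy0 : y = H.fzero := S.eq_fzero_of_smul_eq_zero fun v => by
    have h := S.add_smul_of_mem hy v
    rwa [S.mul_smul_of_mem he, fone_smul, left_eq_add] at h
  have h := IsFieldQuotient.mk_add_mk (δ := δ) _ _ _ hy
  rw [← IsFieldQuotient.mk_mul_mk (δ := δ) _ _ _ he, hone, mul_zero, hy0, S.mk_fzero, add_zero,
    hw] at h
  exact zero_ne_one h

theorem smul_congr {a b : F} (hab : Quot.mk δ a = Quot.mk δ b) (u : Quot S.rel) :
    a • u = b • u := by
  rcases subsingleton_or_nontrivial (Quot S.rel) with _ | _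
  · exact Subsingleton.elim _ _
  obtain ⟨c, hc⟩ := H.fadd_hypergroup.exists_mem_right a b
  have hc0 : Quot.mk δ c = 0 := by
    have h := IsFieldQuotient.mk_add_mk (δ := δ) _ _ _ hc
    rwa [hab, add_eq_left] at h
  rw [S.add_smul_of_mem hc, S.smul_eq_zero_of_mk_eq_zero hc0, add_zero]

noncomputable def smulEnd (a : F) : AddMonoid.End (Quot S.rel) :=
  AddMonoidHom.mk' (a • ·) (S.smul_add a)

noncomputable def toAddMonoidEnd : Quot δ →+* AddMonoid.End (Quot S.rel) :=
  RingHom.mk'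
    { toFun := Quot.lift S.smulEnd fun _ _ h => AddMonoidHom.ext (S.smul_congr (Quot.sound h))
      map_one' := by
        obtain ⟨w, hw⟩ := Quot.exists_rep (1 : Quot δ)
        obtain ⟨c, hc⟩ := H.fmul_nonempty w H.fone
        have hcw : Quot.mk δ c = Quot.mk δ H.fone := by
          rw [← IsFieldQuotient.mk_mul_mk (δ := δ) _ _ _ hc, hw, one_mul]
        rw [← hw]
        ext u
        change w • u = u
        rw [← S.fone_smul u]
        exact (S.mul_smul_of_mem hc u).symm.trans (S.smul_congr hcw u)
      map_mul' := by
        rintro ⟨a⟩ ⟨b⟩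
        obtain ⟨c, hc⟩ := H.fmul_nonempty a b
        rw [IsFieldQuotient.mk_mul_mk (δ := δ) _ _ _ hc]
        ext u
        exact S.mul_smul_of_mem hc u }
    (by
      rintro ⟨a⟩ ⟨b⟩
      obtain ⟨c, hc⟩ := H.fadd_nonempty a b
      rw [IsFieldQuotient.mk_add_mk (δ := δ) _ _ _ hc]
      ext u
      exact S.add_smul_of_mem hc u)

noncomputable instance module : Module (Quot δ) (Quot S.rel) := Module.compHom _ S.toAddMonoidEnd

theorem mk_smul (a : F) (u : Quot S.rel) : Quot.mk δ a • u = a • u := rfl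

noncomputable instance lieAlgebra : LieAlgebra (Quot δ) (Quot S.rel) where
  lie_smul := by
    rintro ⟨a⟩ u v
    simp only [mk_smul]
    exact S.lie_smul a u v

end StronglyRegularEquiv

end LieHyperalgebra

theorem quotient_is_lieAlgebra_of_stronglyRegular_general {F L : Type*} (H : LieHyperalgebra F L)
    (ρ : L → L → Prop) (δ : F → F → Prop)
    (hρe : Equivalence ρ)
    (hρ : H.IsStronglyRegular ρ)
    [fQ : Field (Quot δ)]
    (hfadd : ∀ a b : F, ∀ c ∈ H.fadd a b,
      Quot.mk δ a + Quot.mk δ b = Quot.mk δ c)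
    (hfmul : ∀ a b : F, ∀ c ∈ H.fmul a b,
      Quot.mk δ a * Quot.mk δ b = Quot.mk δ c)
 :
    Nonempty (QuotLieAlgebraWitness H (Quot δ) (Quot ρ) (Quot.mk δ) (Quot.mk ρ)) := by
  let S : H.StronglyRegularEquiv := ⟨ρ, hρe, hρ⟩
  have : H.IsFieldQuotient δ := ⟨hfadd, hfmul⟩
  let _ : LieRing (Quot ρ) := S.lieRing
  let _ : Module (Quot δ) (Quot ρ) := S.module
  let _ : LieAlgebra (Quot δ) (Quot ρ) := S.lieAlgebra
  exact ⟨{ add_eq := fun _ _ _ hz => StronglyRegularEquiv.mk_add_mk (S := S) hz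
           smul_eq := fun _ _ _ hz => StronglyRegularEquiv.smul_mk (S := S) hz
           bracket_eq := fun _ _ _ hz => StronglyRegularEquiv.mk_lie_mk (S := S) hz }⟩

/-- If `ρ` is a strongly regular equivalence relation on a Lie hyperalgebra `L` and `δ`
a strongly regular equivalence relation on the hyperfield `F` (whose quotient `F/δ` is
a field with the induced operations), then the quotient `L/ρ` with the induced
operations is a well-defined Lie algebra over `F/δ`. -/
theorem quotient_is_lieAlgebra_of_stronglyRegular {F L : Type*} (H : LieHyperalgebra F L)
    (ρ : L → L → Prop) (δ : F → F → Prop)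
    (hρe : Equivalence ρ) (hδe : Equivalence δ)
    (hρ : H.IsStronglyRegular ρ) (hδ : H.IsStronglyRegularF δ)
    [fQ : Field (Quot δ)]
    (hfadd : ∀ a b : F, ∀ c ∈ H.fadd a b,
      Quot.mk δ a + Quot.mk δ b = Quot.mk δ c)
    (hfmul : ∀ a b : F, ∀ c ∈ H.fmul a b,
      Quot.mk δ a * Quot.mk δ b = Quot.mk δ c)
 :
    Nonempty (QuotLieAlgebraWitness H (Quot δ) (Quot ρ) (Quot.mk δ) (Quot.mk ρ)) :=
  quotient_is_lieAlgebra_of_stronglyRegular_general H ρ δ hρe hρ (fQ := fQ) hfadd hfmul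
end

section
/- Let L be a Lie hyperalgebra over a hyperfield F with strongly regular relation δ on F making F/δ a field. If an equivalence relation ρ on L makes the quotient L/ρ (with the induced single-valued operations) a Lie algebra over F/δ, then ρ is strongly regular. -/
namespace LieHyperalgebra

variable {α β : Type*} {ρ : α → α → Prop}

theorem setRel_left_of_induced (hρ : Equivalence ρ) {f : β → α → Set α}
    (g : β → Quot ρ → Quot ρ) (hf : ∀ b x, ∀ z ∈ f b x, g b (Quot.mk ρ x) = Quot.mk ρ z)
    {x y : α} (b : β) (hxy : ρ x y) : SetRel ρ (f b x) (f b y) :=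
  fun u hu v hv => (hρ.quot_mk_eq_iff u v).mp <| by
    rw [← hf b x u hu, ← hf b y v hv, Quot.sound hxy]

theorem setRel_right_of_induced (hρ : Equivalence ρ) {f : α → β → Set α}
    (g : Quot ρ → β → Quot ρ) (hf : ∀ x b, ∀ z ∈ f x b, g (Quot.mk ρ x) b = Quot.mk ρ z)
    {x y : α} (b : β) (hxy : ρ x y) : SetRel ρ (f x b) (f y b) :=
  setRel_left_of_induced hρ (f := fun b x => f x b) (fun b q => g q b)
    (fun b x => hf x b) b hxy

end LieHyperalgebra

theorem stronglyRegular_of_quotient_lieAlgebra_general {F L : Type*} (H : LieHyperalgebra F L)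
    (ρ : L → L → Prop) (δ : F → F → Prop)
    (hρe : Equivalence ρ)
    [fQ : Field (Quot δ)]
    (w : QuotLieAlgebraWitness H (Quot δ) (Quot ρ) (Quot.mk δ) (Quot.mk ρ)) :
    H.IsStronglyRegular ρ := by
  let _ := w.lieRing
  let _ := w.module
  exact
    { add_left := fun _ _ a =>
        LieHyperalgebra.setRel_left_of_induced hρe (Quot.mk ρ · + ·) w.add_eq a
      add_right := fun _ _ a =>
        LieHyperalgebra.setRel_right_of_induced hρe (· + Quot.mk ρ ·) w.add_eq a
      smul := fun _ _ c =>
        LieHyperalgebra.setRel_left_of_induced hρe (Quot.mk δ · • ·) w.smul_eq c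
      bracket_left := fun _ _ a =>
        LieHyperalgebra.setRel_left_of_induced hρe (⁅Quot.mk ρ ·, ·⁆) w.bracket_eq a
      bracket_right := fun _ _ a =>
        LieHyperalgebra.setRel_right_of_induced hρe (⁅·, Quot.mk ρ ·⁆) w.bracket_eq a }

/-- Conversely: if an equivalence relation `ρ` on a Lie hyperalgebra `L` is such that the
quotient `L/ρ`, with the induced single-valued operations, is a Lie algebra over the
field `F/δ` (where `δ` is strongly regular on `F`), then `ρ` is strongly regular. -/
theorem stronglyRegular_of_quotient_lieAlgebra {F L : Type*} (H : LieHyperalgebra F L)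
    (ρ : L → L → Prop) (δ : F → F → Prop)
    (hρe : Equivalence ρ) (hδe : Equivalence δ)
    (hδ : H.IsStronglyRegularF δ)
    [fQ : Field (Quot δ)]
    (hfadd : ∀ a b : F, ∀ c ∈ H.fadd a b,
      Quot.mk δ a + Quot.mk δ b = Quot.mk δ c)
    (hfmul : ∀ a b : F, ∀ c ∈ H.fmul a b,
      Quot.mk δ a * Quot.mk δ b = Quot.mk δ c)
    (w : QuotLieAlgebraWitness H (Quot δ) (Quot ρ) (Quot.mk δ) (Quot.mk ρ)) :
    H.IsStronglyRegular ρ :=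
  stronglyRegular_of_quotient_lieAlgebra_general H ρ δ hρe (fQ := fQ) w
end

section
/- For every n ≥ 1, the relation S_n on a Lie hyperalgebra L is reflexive and symmetric, and the relations are nested: L ⊆ S_{n+1} ⊆ S_n ⊆ S_1 = A, where L is the fundamental relation and A is the relation defining the abelian quotient. -/
/-! Inverting all permutations of an `𝒮ₙ`-datum swaps `Σ ℓᵢ` and `Σ ℓ'ᵢ`, which gives symmetry;
identity permutations embed `ℒ` into every `𝒮ₙ`, and reflexivity comes from `x = 1 · x`. The
derived series is decreasing, so the constraint on the `σᵢ` only weakens as `n` decreases, and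
it is vacuous for `n = 1` because `L^{[0]} = L`. -/

theorem ext2_mono {α : Type*} (f : α → α → Set α) {A A' B B' : Set α} (hA : A ⊆ A')
    (hB : B ⊆ B') : ext2 f A B ⊆ ext2 f A' B' :=
  Set.biUnion_mono hA fun _ _ => Set.biUnion_subset_biUnion_left hB

theorem hsumSet_hprod_perm_symm {α : Type*} (f g : α → α → Set α) {p : ℕ}
    {q : Fin (p + 1) → ℕ} (lam : ∀ k, Fin (q k + 1) → α) (e : Equiv.Perm (Fin (p + 1)))
    (e' : ∀ k, Equiv.Perm (Fin (q k + 1))) :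
    hsumSet f (fun k => hprod g fun r =>
        lam (e (e.symm k)) (e' (e (e.symm k)) ((e' (e (e.symm k))).symm r)))
      = hsumSet f (fun k => hprod g (lam k)) := by
  congr 1
  funext k
  -- `rw` abstracts every occurrence of `e (e.symm k)` at once, including those in types
  rw [Equiv.apply_symm_apply]
  simp only [Equiv.apply_symm_apply]

theorem hsumSet_comp_perm_symm {α : Type*} (f : α → α → Set α) {t : ℕ}
    (A : Fin (t + 1) → Set α) (e : Equiv.Perm (Fin (t + 1))) :
    hsumSet f (fun i => A (e (e.symm i))) = hsumSet f A := by
  simp only [Equiv.apply_symm_apply]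

namespace LieHyperalgebra

variable {F L : Type*} {H : LieHyperalgebra F L} {m n : ℕ}

theorem derivedSet_antitone : Antitone H.derivedSet :=
  antitone_nat_of_succ_le fun i => by
    induction i with
    | zero => exact Set.subset_univ _
    | succ i ih => exact ext2_mono _ ih ih

namespace SData

def ofLE (d : SData H n) (hmn : m ≤ n) : SData H m :=
  { d with
    σi_fix := fun i j hj =>
      d.σi_fix i j fun hmem => hj (derivedSet_antitone (Nat.sub_le_sub_right hmn 1) hmem) }

def symm (d : SData H n) : SData H n where
  t := d.t
  σ := d.σ.symm
  m i := d.m (d.σ i)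
  f i := d.f (d.σ i)
  h i j := d.h (d.σ i) (d.σi (d.σ i) j)
  p i j := d.p (d.σ i) (d.σi (d.σ i) j)
  q i j k := d.q _ _ (d.σij (d.σ i) (d.σi (d.σ i) j) k)
  lam i j k := d.lam _ _ (d.σij (d.σ i) (d.σi (d.σ i) j) k) ∘ d.σijk _ _ _
  σi i := (d.σi (d.σ i)).symm
  σi_fix _ _ hj := (Equiv.symm_apply_eq _).2 ((d.σi _).injective (d.σi_fix _ _ hj)).symm
  σij _ _ := (d.σij _ _).symm
  σijk _ _ _ := (d.σijk _ _ _).symm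

theorem symm_lhs (d : SData H n) : d.symm.lhs = d.rhs := rfl

theorem symm_g' (d : SData H n) (i : Fin (d.t + 1)) :
    d.symm.g' i = d.g (d.σ (d.σ.symm i)) := by
  funext j
  set I := d.σ (d.σ.symm i)
  set J := d.σi I ((d.σi I).symm j)
  calc d.symm.g' i j
      = ⋃ c ∈ hsumSet H.fadd (fun k => hprod H.fmul (d.lam I J k)), H.smul c (d.h I J) :=
        congrArg (fun s => ⋃ c ∈ s, H.smul c (d.h I J))
          (hsumSet_hprod_perm_symm H.fadd H.fmul (d.lam I J) (d.σij I J) (d.σijk I J))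
    _ = d.g I j := congrArg (d.g I) (Equiv.apply_symm_apply _ j)

theorem symm_rhs (d : SData H n) : d.symm.rhs = d.lhs :=
  calc d.symm.rhs
      = hsumSet H.add (fun i => H.evalBExpr (d.f (d.σ (d.σ.symm i))) (d.g (d.σ (d.σ.symm i)))) :=
        congrArg (hsumSet H.add) (funext fun i => congrArg (H.evalBExpr _) (d.symm_g' i))
    _ = d.lhs := hsumSet_comp_perm_symm _ (fun i => H.evalBExpr (d.f i) (d.g i)) d.σ

def ofLData (d : LData F L) : SData H n :=
  { d with
    σ := 1
    σi := fun _ => 1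
    σi_fix := fun _ _ _ => rfl
    σij := fun _ _ => 1
    σijk := fun _ _ _ => 1 }

def toAData (d : SData H n) : AData F L := { d with }

end SData

def AData.toSData (d : AData F L) : SData H 1 :=
  { d with σi_fix := fun _ _ hj => absurd (Set.mem_univ _) hj }

def LData.single (H : LieHyperalgebra F L) (x : L) : LData F L where
  t := 0
  m _ := 0
  f _ := .leaf 0
  h _ _ := x
  p _ _ := 0
  q _ _ _ := 0
  lam _ _ _ _ := H.fone

theorem mem_lLhs_single (x : L) : x ∈ lLhs (H := H) (LData.single H x) := by
  simp [lLhs, LData.single, lG, hsumSet, hprod, evalBExpr, H.one_smul]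

variable {x y : L}

theorem LRel.refl (x : L) : H.LRel x x :=
  ⟨.single H x, mem_lLhs_single x, mem_lLhs_single x⟩

theorem LRel.sRel (h : H.LRel x y) : H.SRel n x y :=
  let ⟨d, hx, hy⟩ := h
  ⟨.ofLData d, hx, hy⟩

theorem SRel.refl (x : L) : H.SRel n x x := (LRel.refl x).sRel

theorem SRel.symm (h : H.SRel n x y) : H.SRel n y x :=
  let ⟨d, hx, hy⟩ := h
  ⟨d.symm, d.symm_lhs ▸ hy, d.symm_rhs ▸ hx⟩

theorem SRel.of_le (hmn : m ≤ n) (h : H.SRel n x y) : H.SRel m x y :=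
  let ⟨d, hx, hy⟩ := h
  ⟨d.ofLE hmn, hx, hy⟩

theorem sRel_one_iff_aRel : H.SRel 1 x y ↔ H.ARel x y :=
  ⟨fun ⟨d, hx, hy⟩ => ⟨d.toAData, hx, hy⟩, fun ⟨d, hx, hy⟩ => ⟨d.toSData, hx, hy⟩⟩

end LieHyperalgebra

theorem LieHyperalgebra.SRel_refl_symm_nested_general {F L : Type*}
    (H : LieHyperalgebra F L) (n : ℕ) :
    (∀ x : L, H.SRel n x x) ∧
    (∀ x y : L, H.SRel n x y → H.SRel n y x) ∧
    (∀ x y : L, H.LRel x y → H.SRel (n + 1) x y) ∧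
    (∀ x y : L, H.SRel (n + 1) x y → H.SRel n x y) ∧
    (∀ x y : L, H.SRel 1 x y ↔ H.ARel x y) :=
  ⟨SRel.refl, fun _ _ => SRel.symm, fun _ _ => LRel.sRel, fun _ _ => SRel.of_le n.le_succ,
    fun _ _ => sRel_one_iff_aRel⟩

/-- For every `n ≥ 1`, the relation `𝒮ₙ` on a Lie hyperalgebra is reflexive and
symmetric, and the relations are nested:
`ℒ ⊆ 𝒮ₙ₊₁ ⊆ 𝒮ₙ ⊆ 𝒮₁ = 𝒜`. -/
theorem LieHyperalgebra.SRel_refl_symm_nested {F L : Type*}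
    (H : LieHyperalgebra F L) (n : ℕ) (hn : 1 ≤ n) :
    (∀ x : L, H.SRel n x x) ∧
    (∀ x y : L, H.SRel n x y → H.SRel n y x) ∧
    (∀ x y : L, H.LRel x y → H.SRel (n + 1) x y) ∧
    (∀ x y : L, H.SRel (n + 1) x y → H.SRel n x y) ∧
    (∀ x y : L, H.SRel 1 x y ↔ H.ARel x y) :=
  LieHyperalgebra.SRel_refl_symm_nested_general H n
end

section
/- Let L be a Lie hyperalgebra over a hyperfield F with L/L* finite dimensional (char(F/α*) ≠ 2), and let ξ be any equivalence relation on L such that L/ξ (with the induced operations) is a solvable Lie algebra and (L/ξ, ⊕) is an abelian group. Then S = ⋂_{n≥1} S_n* ⊆ ξ. In particular, S is the smallest equivalence relation on L whose quotient is a solvable Lie algebra. -/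
/-- The relation `𝒮 = ⋂_{n ≥ 1} 𝒮ₙ*` on a Lie hyperalgebra. -/
def LieHyperalgebra.SInt {F L : Type*} (H : LieHyperalgebra F L) (x y : L) : Prop :=
  ∀ n : ℕ, 1 ≤ n → Relation.TransGen (H.SRel n) x y

/-! Every hyperoperation becomes single-valued in `L/ξ`, so each side of an `𝒮ₙ`-relation
evaluates there to an honest sum of brackets of scalar multiples. The scalar coefficients are
sums of products, hence invariant under the permutations `σᵢⱼ`, `σᵢⱼₖ`, and the sum itself is
invariant under `σ` since `(L/ξ, +)` is commutative. The permutations `σᵢ` may only move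
arguments `hᵢⱼ` lying in `L^{[n-1]}`; if `L/ξ` is solvable of length `n - 1`, all such
arguments vanish in `L/ξ`, so both sides of `𝒮ₙ` agree there. -/

theorem map_eq_sum_of_mem_hsumSet {α β : Type*} [AddCommMonoid β] {f : α → α → Set α}
    {q : α → β} (hq : ∀ a b, ∀ c ∈ f a b, q a + q b = q c) :
    ∀ {t : ℕ} {A : Fin (t + 1) → Set α} {v : Fin (t + 1) → β},
      (∀ i, ∀ a ∈ A i, q a = v i) → ∀ c ∈ hsumSet f A, q c = ∑ i, v i
  | 0, _, _, hA, c, hc => by simpa using hA 0 c hc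
  | t + 1, A, v, hA, c, hc => by
    simp only [hsumSet, ext2, Set.mem_iUnion] at hc
    obtain ⟨a, ha, b, hb, hc⟩ := hc
    rw [Fin.sum_univ_succ, ← hq a b c hc, hA 0 a ha,
      map_eq_sum_of_mem_hsumSet hq (A := A ∘ Fin.succ) (fun i => hA i.succ) b hb]

theorem map_eq_prod_of_mem_hprod {α β : Type*} [CommMonoid β] {f : α → α → Set α}
    {q : α → β} (hq : ∀ a b, ∀ c ∈ f a b, q a * q b = q c) :
    ∀ {t : ℕ} (lam : Fin (t + 1) → α), ∀ c ∈ hprod f lam, q c = ∏ i, q (lam i)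
  | 0, lam, c, hc => by simp_all [hprod]
  | t + 1, lam, c, hc => by
    simp only [hprod, ext2, Set.mem_iUnion, Set.mem_singleton_iff] at hc
    obtain ⟨_, rfl, b, hb, hc⟩ := hc
    rw [Fin.prod_univ_succ, ← hq _ b c hc, map_eq_prod_of_mem_hprod hq _ b hb]
    rfl

def BExpr.eval {β : Type*} [Bracket β β] : ∀ {m : ℕ}, BExpr m → (Fin m → β) → β
  | _, .leaf j, w => w j
  | _, .br e₁ e₂, w => ⁅e₁.eval w, e₂.eval w⁆

namespace LieHyperalgebra

variable {F L : Type*} {H : LieHyperalgebra F L}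

theorem map_eq_sum_prod_of_mem {K : Type*} [CommSemiring K] {φ : F → K}
    (hφadd : ∀ a b, ∀ c ∈ H.fadd a b, φ a + φ b = φ c)
    (hφmul : ∀ a b, ∀ c ∈ H.fmul a b, φ a * φ b = φ c)
    {t : ℕ} {q : Fin (t + 1) → ℕ} (lam : ∀ k, Fin (q k + 1) → F) :
    ∀ c ∈ hsumSet H.fadd (fun k => hprod H.fmul (lam k)), φ c = ∑ k, ∏ r, φ (lam k r) :=
  map_eq_sum_of_mem_hsumSet hφadd fun k => map_eq_prod_of_mem_hprod hφmul (lam k)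

theorem map_eq_eval_of_mem_evalBExpr {M : Type*} [Bracket M M] {Q : L → M}
    (hQbr : ∀ x y, ∀ z ∈ H.bracket x y, ⁅Q x, Q y⁆ = Q z) {m : ℕ} (e : BExpr m)
    {g : Fin m → Set L} {w : Fin m → M} (hg : ∀ j, ∀ z ∈ g j, Q z = w j) :
    ∀ z ∈ H.evalBExpr e g, Q z = e.eval w := by
  induction e with
  | leaf j => simpa only [evalBExpr, BExpr.eval] using hg j
  | br e₁ e₂ ih₁ ih₂ =>
    intro z hz
    simp only [evalBExpr, ext2, Set.mem_iUnion] at hz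
    obtain ⟨a, ha, b, hb, hz⟩ := hz
    rw [← hQbr a b z hz, ih₁ a ha, ih₂ b hb, BExpr.eval]

theorem map_mem_derivedSeries_of_mem_derivedSet {M : Type*} [LieRing M] {Q : L → M}
    (hQbr : ∀ x y, ∀ z ∈ H.bracket x y, ⁅Q x, Q y⁆ = Q z) :
    ∀ k, ∀ h ∈ H.derivedSet k, Q h ∈ LieAlgebra.derivedSeries ℤ M k
  | 0, _, _ => LieSubmodule.mem_top _
  | k + 1, h, hh => by
    simp only [derivedSet, ext2, Set.mem_iUnion] at hh
    obtain ⟨a, ha, b, hb, hh⟩ := hh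
    rw [LieAlgebra.derivedSeries_def, LieAlgebra.derivedSeriesOfIdeal_succ, ← hQbr a b h hh]
    exact LieSubmodule.lie_mem_lie (map_mem_derivedSeries_of_mem_derivedSet hQbr k a ha)
      (map_mem_derivedSeries_of_mem_derivedSet hQbr k b hb)

theorem exists_map_eq_zero_of_mem_derivedSet {M : Type*} [LieRing M] [LieAlgebra.IsSolvable M]
    {Q : L → M} (hQbr : ∀ x y, ∀ z ∈ H.bracket x y, ⁅Q x, Q y⁆ = Q z) :
    ∃ n, ∀ h ∈ H.derivedSet n, Q h = 0 := by
  obtain ⟨n, hn⟩ := LieAlgebra.IsSolvable.solvable_int (L := M)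
  refine ⟨n, fun h hh => ?_⟩
  simpa [hn] using map_mem_derivedSeries_of_mem_derivedSet hQbr n h hh

namespace SData

variable {K M : Type*} [CommSemiring K] [AddCommMonoid M] [Module K M]
  {φ : F → K} {Q : L → M} {n : ℕ} (d : SData H n)

def coeff (φ : F → K) (i : Fin (d.t + 1)) (j : Fin (d.m i + 1)) : K :=
  ∑ k, ∏ r, φ (d.lam i j k r)

theorem map_of_mem_g (hφadd : ∀ a b, ∀ c ∈ H.fadd a b, φ a + φ b = φ c)
    (hφmul : ∀ a b, ∀ c ∈ H.fmul a b, φ a * φ b = φ c)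
    (hQsmul : ∀ a x, ∀ z ∈ H.smul a x, φ a • Q x = Q z) (i : Fin (d.t + 1))
    (j : Fin (d.m i + 1)) : ∀ z ∈ d.g i j, Q z = d.coeff φ i j • Q (d.h i j) := by
  intro z hz
  simp only [g, Set.mem_iUnion] at hz
  obtain ⟨c, hc, hz⟩ := hz
  rw [← hQsmul c _ z hz, map_eq_sum_prod_of_mem hφadd hφmul _ c hc, coeff]

theorem map_of_mem_A (hφadd : ∀ a b, ∀ c ∈ H.fadd a b, φ a + φ b = φ c)
    (hφmul : ∀ a b, ∀ c ∈ H.fmul a b, φ a * φ b = φ c) (i : Fin (d.t + 1))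
    (j : Fin (d.m i + 1)) : ∀ c ∈ d.A i j, φ c = d.coeff φ i j := by
  intro c hc
  rw [map_eq_sum_prod_of_mem hφadd hφmul _ c hc, coeff,
    ← Equiv.sum_comp (d.σij i j) (fun k => ∏ r, φ (d.lam i j k r))]
  exact Finset.sum_congr rfl fun k _ =>
    Equiv.prod_comp (d.σijk i j (d.σij i j k)) fun r => φ (d.lam i j (d.σij i j k) r)

theorem coeff_smul_map_h_σi (hzero : ∀ h ∈ H.derivedSet (n - 1), Q h = 0)
    (i : Fin (d.t + 1)) (j : Fin (d.m i + 1)) :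
    d.coeff φ i (d.σi i j) • Q (d.h i (d.σi i j)) = d.coeff φ i j • Q (d.h i j) := by
  by_cases hj : d.σi i j = j
  · rw [hj]
  have hmoved : ∀ j', d.σi i j' ≠ j' → Q (d.h i j') = 0 := fun j' hj' =>
    hzero _ (not_not.mp (mt (d.σi_fix i j') hj'))
  rw [hmoved j hj, hmoved (d.σi i j) fun h => hj ((d.σi i).injective h), smul_zero, smul_zero]

theorem map_of_mem_g' (hφadd : ∀ a b, ∀ c ∈ H.fadd a b, φ a + φ b = φ c)
    (hφmul : ∀ a b, ∀ c ∈ H.fmul a b, φ a * φ b = φ c)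
    (hQsmul : ∀ a x, ∀ z ∈ H.smul a x, φ a • Q x = Q z)
    (hzero : ∀ h ∈ H.derivedSet (n - 1), Q h = 0) (i : Fin (d.t + 1))
    (j : Fin (d.m (d.σ i) + 1)) :
    ∀ z ∈ d.g' i j, Q z = d.coeff φ (d.σ i) j • Q (d.h (d.σ i) j) := by
  intro z hz
  simp only [g', Set.mem_iUnion] at hz
  obtain ⟨c, hc, hz⟩ := hz
  rw [← hQsmul c _ z hz, d.map_of_mem_A hφadd hφmul _ _ c hc, d.coeff_smul_map_h_σi hzero]

end SData

theorem SRel.map_eq {K M : Type*} [CommSemiring K] [AddCommMonoid M] [Module K M] [Bracket M M]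
    {φ : F → K} {Q : L → M} (hφadd : ∀ a b, ∀ c ∈ H.fadd a b, φ a + φ b = φ c)
    (hφmul : ∀ a b, ∀ c ∈ H.fmul a b, φ a * φ b = φ c)
    (hQadd : ∀ x y, ∀ z ∈ H.add x y, Q x + Q y = Q z)
    (hQsmul : ∀ a x, ∀ z ∈ H.smul a x, φ a • Q x = Q z)
    (hQbr : ∀ x y, ∀ z ∈ H.bracket x y, ⁅Q x, Q y⁆ = Q z) {n : ℕ}
    (hzero : ∀ h ∈ H.derivedSet (n - 1), Q h = 0) {x y : L} :
    H.SRel n x y → Q x = Q y := by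
  rintro ⟨d, hx, hy⟩
  let term i := (d.f i).eval fun j => d.coeff φ i j • Q (d.h i j)
  have hQx : Q x = ∑ i, term i := map_eq_sum_of_mem_hsumSet hQadd
    (fun i => map_eq_eval_of_mem_evalBExpr hQbr _ (d.map_of_mem_g hφadd hφmul hQsmul i)) x hx
  have hQy : Q y = ∑ i, term (d.σ i) := map_eq_sum_of_mem_hsumSet hQadd
    (fun i => map_eq_eval_of_mem_evalBExpr hQbr _
      (d.map_of_mem_g' hφadd hφmul hQsmul hzero i)) y hy
  rw [hQx, hQy, Equiv.sum_comp]

end LieHyperalgebra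

theorem LieHyperalgebra.SInt_smallest_general {F L : Type*} (H : LieHyperalgebra F L)
    [fQ : Field (Quot (Relation.TransGen H.alphaRel))]
    (hfadd : ∀ a b : F, ∀ c ∈ H.fadd a b,
      Quot.mk (Relation.TransGen H.alphaRel) a + Quot.mk (Relation.TransGen H.alphaRel) b
        = Quot.mk (Relation.TransGen H.alphaRel) c)
    (hfmul : ∀ a b : F, ∀ c ∈ H.fmul a b,
      Quot.mk (Relation.TransGen H.alphaRel) a * Quot.mk (Relation.TransGen H.alphaRel) b
        = Quot.mk (Relation.TransGen H.alphaRel) c)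
    (ξ : L → L → Prop) (hξe : Equivalence ξ)
    [lieRingξ : LieRing (Quot ξ)]
    [moduleξ : Module (Quot (Relation.TransGen H.alphaRel)) (Quot ξ)]
    (haddξ : ∀ x y : L, ∀ z ∈ H.add x y, Quot.mk ξ x + Quot.mk ξ y = Quot.mk ξ z)
    (hsmulξ : ∀ (a : F) (x : L), ∀ z ∈ H.smul a x,
      Quot.mk (Relation.TransGen H.alphaRel) a • Quot.mk ξ x = Quot.mk ξ z)
    (hbracketξ : ∀ x y : L, ∀ z ∈ H.bracket x y,
      ⁅Quot.mk ξ x, Quot.mk ξ y⁆ = Quot.mk ξ z)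
    [solv : LieAlgebra.IsSolvable (Quot ξ)] :
    ∀ x y : L, H.SInt x y → ξ x y := by
  intro x y hxy
  obtain ⟨n, hn⟩ := exists_map_eq_zero_of_mem_derivedSet hbracketξ
  have hS : ∀ a b, H.SRel (n + 1) a b → Quot.mk ξ a = Quot.mk ξ b := fun a b =>
    SRel.map_eq (n := n + 1) hfadd hfmul haddξ hsmulξ hbracketξ hn
  have hQ : Quot.mk ξ x = Quot.mk ξ y := by
    simpa only [Relation.transGen_eq_self] using
      (hxy (n + 1) (Nat.le_add_left 1 n)).lift (Quot.mk ξ) hS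
  exact hξe.eqvGen_iff.mp (Quot.eq.mp hQ)

/-- Minimality of `𝒮`: if `L/ℒ*` is finite dimensional (and `char(F/α*) ≠ 2`) and `ξ` is
any equivalence relation on `L` such that the quotient `L/ξ` with the induced operations
is a solvable Lie algebra (in particular `(L/ξ, ⊕)` is an abelian group), then
`𝒮 = ⋂_{n≥1} 𝒮ₙ* ⊆ ξ`.  In particular `𝒮` is the smallest equivalence relation on `L`
whose quotient is a solvable Lie algebra. -/
theorem LieHyperalgebra.SInt_smallest {F L : Type*} (H : LieHyperalgebra F L)
    [fQ : Field (Quot (Relation.TransGen H.alphaRel))]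
    (hfadd : ∀ a b : F, ∀ c ∈ H.fadd a b,
      Quot.mk (Relation.TransGen H.alphaRel) a + Quot.mk (Relation.TransGen H.alphaRel) b
        = Quot.mk (Relation.TransGen H.alphaRel) c)
    (hfmul : ∀ a b : F, ∀ c ∈ H.fmul a b,
      Quot.mk (Relation.TransGen H.alphaRel) a * Quot.mk (Relation.TransGen H.alphaRel) b
        = Quot.mk (Relation.TransGen H.alphaRel) c)
    (hchar : (2 : Quot (Relation.TransGen H.alphaRel)) ≠ 0)
    [lieRing0 : LieRing (Quot (Relation.TransGen H.LRel))]
    [module0 : Module (Quot (Relation.TransGen H.alphaRel)) (Quot (Relation.TransGen H.LRel))]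
    [lieAlg0 : LieAlgebra (Quot (Relation.TransGen H.alphaRel))
      (Quot (Relation.TransGen H.LRel))]
    (hadd0 : ∀ x y : L, ∀ z ∈ H.add x y,
      Quot.mk (Relation.TransGen H.LRel) x + Quot.mk (Relation.TransGen H.LRel) y
        = Quot.mk (Relation.TransGen H.LRel) z)
    (hsmul0 : ∀ (a : F) (x : L), ∀ z ∈ H.smul a x,
      Quot.mk (Relation.TransGen H.alphaRel) a • Quot.mk (Relation.TransGen H.LRel) x
        = Quot.mk (Relation.TransGen H.LRel) z)
    (hbracket0 : ∀ x y : L, ∀ z ∈ H.bracket x y,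
      ⁅Quot.mk (Relation.TransGen H.LRel) x, Quot.mk (Relation.TransGen H.LRel) y⁆
        = Quot.mk (Relation.TransGen H.LRel) z)
    [fin0 : FiniteDimensional (Quot (Relation.TransGen H.alphaRel))
      (Quot (Relation.TransGen H.LRel))]
    (ξ : L → L → Prop) (hξe : Equivalence ξ)
    [lieRingξ : LieRing (Quot ξ)]
    [moduleξ : Module (Quot (Relation.TransGen H.alphaRel)) (Quot ξ)]
    [lieAlgξ : LieAlgebra (Quot (Relation.TransGen H.alphaRel)) (Quot ξ)]
    (haddξ : ∀ x y : L, ∀ z ∈ H.add x y, Quot.mk ξ x + Quot.mk ξ y = Quot.mk ξ z)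
    (hsmulξ : ∀ (a : F) (x : L), ∀ z ∈ H.smul a x,
      Quot.mk (Relation.TransGen H.alphaRel) a • Quot.mk ξ x = Quot.mk ξ z)
    (hbracketξ : ∀ x y : L, ∀ z ∈ H.bracket x y,
      ⁅Quot.mk ξ x, Quot.mk ξ y⁆ = Quot.mk ξ z)
    [solv : LieAlgebra.IsSolvable (Quot ξ)] :
    ∀ x y : L, H.SInt x y → ξ x y :=
  LieHyperalgebra.SInt_smallest_general H (fQ := fQ) hfadd hfmul ξ hξe (lieRingξ := lieRingξ)
    (moduleξ := moduleξ) haddξ hsmulξ hbracketξ (solv := solv)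
end

section
/- Let L be a perfect Lie algebra (over a field of characteristic ≠ 2), viewed as a trivial Lie hyperalgebra. Then for every n ≥ 1, S_n* = L × L, hence L/S_n* = 0; moreover the fundamental relation satisfies L-relation = {(x,x) : x ∈ L} and L/L-relation ≅ L. Consequently S = ⋂_n S_n* = L × L and L/S = 0. -/
section Hyperoperations

variable {α : Type*} {f : α → α → Set α}

theorem ext2_singleton_singleton (a b : α) : ext2 f {a} {b} = f a b := by
  simp [ext2]

theorem hsumSet_singleton [AddCommMonoid α] (hf : ∀ a b, f a b = {a + b}) :
    ∀ {t : ℕ} (g : Fin (t + 1) → α), hsumSet f (fun i => {g i}) = {∑ i, g i}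
  | 0, g => by simp [hsumSet]
  | t + 1, g => by
    change ext2 f {g 0} (hsumSet f fun i => {g i.succ}) = _
    rw [hsumSet_singleton hf, ext2_singleton_singleton, hf, Fin.sum_univ_succ g]

theorem hprod_eq_singleton_prod [CommMonoid α] (hf : ∀ a b, f a b = {a * b}) :
    ∀ {q : ℕ} (g : Fin (q + 1) → α), hprod f g = {∏ i, g i}
  | 0, g => by simp [hprod]
  | q + 1, g => by
    rw [hprod, hprod_eq_singleton_prod hf, ext2_singleton_singleton, hf, Fin.prod_univ_succ g]
    rfl

end Hyperoperations

section LieAlgebra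

variable {K L : Type*} [Field K] [LieRing L] [LieAlgebra K L]

theorem span_image2_lie_eq_top (hperfect : LieAlgebra.derivedSeries K L 1 = ⊤) {S : Set L}
    (hS : Submodule.span K S = ⊤) :
    Submodule.span K (Set.image2 (fun a b => ⁅a, b⁆) S S) = ⊤ := by
  have hlie : ∀ x y : L, ⁅x, y⁆ ∈ Submodule.span K (Set.image2 (fun a b => ⁅a, b⁆) S S) := by
    intro x y
    have := Submodule.map₂_span_span K (LieModule.toEnd K L L : L →ₗ[K] Module.End K L) S S
    simp only [LieHom.coe_toLinearMap, LieModule.toEnd_apply_apply, hS] at this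
    exact this ▸ Submodule.apply_mem_map₂ _ trivial trivial
  refine eq_top_iff.mpr fun z _ => ?_
  have hz : z ∈ (LieAlgebra.derivedSeries K L 1 : Submodule K L) := by
    rw [hperfect]; trivial
  rw [LieAlgebra.coe_derivedSeries_one_eq] at hz
  exact Submodule.span_le.mpr (by rintro _ ⟨x, y, rfl⟩; exact hlie x y) hz

theorem exists_sum_lie_eq_of_mem_span {S : Set L} (hS : ∀ (c : K), ∀ a ∈ S, c • a ∈ S) {z : L}
    (hz : z ∈ Submodule.span K (Set.image2 (fun a b => ⁅a, b⁆) S S)) :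
    ∃ (N : ℕ) (a b : Fin N → L), (∀ i, a i ∈ S) ∧ (∀ i, b i ∈ S) ∧ ∑ i, ⁅a i, b i⁆ = z := by
  obtain ⟨N, c, w, rfl⟩ := Submodule.mem_span_set'.mp hz
  choose a ha b hb hab using fun i => (w i).2
  refine ⟨N, fun i => c i • a i, b, fun i => hS _ _ (ha i), hb, ?_⟩
  simp only [smul_lie, hab]

end LieAlgebra

def BExpr.lieEval {L : Type*} [Bracket L L] : ∀ {m : ℕ}, BExpr m → (Fin m → L) → L
  | _, .leaf j, v => v j
  | _, .br e₁ e₂, v => ⁅e₁.lieEval v, e₂.lieEval v⁆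

namespace LieHyperalgebra

variable {K L : Type*} [Field K] [LieRing L] [LieAlgebra K L]

structure IsTrivial (H : LieHyperalgebra K L) : Prop where
  add_eq : ∀ x y : L, H.add x y = {x + y}
  smul_eq : ∀ (a : K) (x : L), H.smul a x = {a • x}
  bracket_eq : ∀ x y : L, H.bracket x y = {⁅x, y⁆}
  fadd_eq : ∀ a b : K, H.fadd a b = {a + b}
  fmul_eq : ∀ a b : K, H.fmul a b = {a * b}

-- Reducible, so that `simp` can unfold the projections `t`, `m`, `q`, … occurring in index types.
abbrev SData.ofBrackets (H : LieHyperalgebra K L) (n : ℕ) (e : L) {N : ℕ} (a b : Fin N → L)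
    (ha : ∀ i, a i ∈ H.derivedSet (n - 1)) (hb : ∀ i, b i ∈ H.derivedSet (n - 1)) :
    SData H n where
  t := N
  σ := Equiv.refl _
  m _ := 1
  f := Fin.cases (.leaf 0) fun _ => .br (.leaf 0) (.leaf 1)
  h := Fin.cases (fun _ => e) fun i => ![a i, b i]
  p _ _ := 0
  q _ _ _ := 0
  lam _ _ _ _ := 1
  σi := Fin.cases (Equiv.refl _) fun _ => Equiv.swap 0 1
  σi_fix i j hj := by
    cases i using Fin.cases with
    | zero => rfl
    | succ i => exact absurd (by fin_cases j <;> simp [ha, hb]) hj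
  σij _ _ := Equiv.refl _
  σijk _ _ _ := Equiv.refl _

namespace IsTrivial

variable {H : LieHyperalgebra K L}

theorem evalBExpr_singleton (hH : H.IsTrivial) : ∀ {m : ℕ} (e : BExpr m) (v : Fin m → L),
    H.evalBExpr e (fun j => {v j}) = {e.lieEval v}
  | _, .leaf _, _ => by rw [evalBExpr, BExpr.lieEval]
  | _, .br e₁ e₂, v => by
    rw [evalBExpr, hH.evalBExpr_singleton e₁, hH.evalBExpr_singleton e₂,
      ext2_singleton_singleton, hH.bracket_eq, BExpr.lieEval]

theorem biUnion_smul_eq (hH : H.IsTrivial) {p : ℕ} {q : Fin (p + 1) → ℕ}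
    (lam : ∀ k, Fin (q k + 1) → K) (x : L) :
    ⋃ c ∈ hsumSet H.fadd (fun k => hprod H.fmul (lam k)), H.smul c x
      = {(∑ k, ∏ r, lam k r) • x} := by
  simp only [hprod_eq_singleton_prod hH.fmul_eq, hsumSet_singleton hH.fadd_eq,
    Set.biUnion_singleton, hH.smul_eq]

theorem lLhs_eq (hH : H.IsTrivial) (d : LData K L) :
    lLhs (H := H) d = {∑ i, (d.f i).lieEval fun j => (∑ k, ∏ r, d.lam i j k r) • d.h i j} := by
  have hG : ∀ i, lG (H := H) d i = fun j => {(∑ k, ∏ r, d.lam i j k r) • d.h i j} :=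
    fun i => funext fun j => hH.biUnion_smul_eq _ _
  simp only [lLhs, hG, hH.evalBExpr_singleton, hsumSet_singleton hH.add_eq]

theorem lRel_iff (hH : H.IsTrivial) {x y : L} : H.LRel x y ↔ x = y := by
  constructor
  · rintro ⟨d, hx, hy⟩
    rw [hH.lLhs_eq] at hx hy
    exact hx.trans hy.symm
  · rintro rfl
    let d : LData K L := ⟨0, fun _ => 0, fun _ => .leaf 0, fun _ _ => x, fun _ _ => 0,
      fun _ _ _ => 0, fun _ _ _ _ => 1⟩
    have hx : x ∈ lLhs (H := H) d := by simp [hH.lLhs_eq, d, BExpr.lieEval]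
    exact ⟨d, hx, hx⟩

theorem derivedSet_succ (hH : H.IsTrivial) (k : ℕ) :
    H.derivedSet (k + 1) = Set.image2 (fun a b => ⁅a, b⁆) (H.derivedSet k) (H.derivedSet k) := by
  ext z
  simp [derivedSet, ext2, hH.bracket_eq, eq_comm]

theorem smul_mem_derivedSet (hH : H.IsTrivial) (c : K) :
    ∀ {k : ℕ} {a : L}, a ∈ H.derivedSet k → c • a ∈ H.derivedSet k
  | 0, _, _ => trivial
  | k + 1, _, ha => by
    rw [hH.derivedSet_succ] at ha ⊢
    obtain ⟨a, ha, b, hb, rfl⟩ := ha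
    exact ⟨c • a, hH.smul_mem_derivedSet c ha, b, hb, smul_lie c a b⟩

theorem span_derivedSet (hH : H.IsTrivial) (hperfect : LieAlgebra.derivedSeries K L 1 = ⊤) :
    ∀ k, Submodule.span K (H.derivedSet k) = ⊤
  | 0 => Submodule.span_univ
  | k + 1 => by
    rw [hH.derivedSet_succ]
    exact span_image2_lie_eq_top hperfect (hH.span_derivedSet hperfect k)

theorem exists_sum_lie_eq (hH : H.IsTrivial) (hperfect : LieAlgebra.derivedSeries K L 1 = ⊤)
    (k : ℕ) (z : L) :
    ∃ (N : ℕ) (a b : Fin N → L), (∀ i, a i ∈ H.derivedSet k) ∧ (∀ i, b i ∈ H.derivedSet k) ∧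
      ∑ i, ⁅a i, b i⁆ = z := by
  refine exists_sum_lie_eq_of_mem_span (fun c _ => hH.smul_mem_derivedSet c) ?_
  rw [← hH.derivedSet_succ, hH.span_derivedSet hperfect]
  trivial

theorem A_eq (hH : H.IsTrivial) {n : ℕ} (d : SData H n) (i : Fin (d.t + 1))
    (j : Fin (d.m i + 1)) : d.A i j = {∑ k, ∏ r, d.lam i j k r} := by
  simp only [SData.A, hprod_eq_singleton_prod hH.fmul_eq, hsumSet_singleton hH.fadd_eq,
    Equiv.prod_comp]
  rw [Equiv.sum_comp (d.σij i j) (fun k => ∏ r, d.lam i j k r)]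

theorem lhs_eq (hH : H.IsTrivial) {n : ℕ} (d : SData H n) :
    d.lhs = {∑ i, (d.f i).lieEval fun j => (∑ k, ∏ r, d.lam i j k r) • d.h i j} := by
  have hg : ∀ i, d.g i = fun j => {(∑ k, ∏ r, d.lam i j k r) • d.h i j} :=
    fun i => funext fun j => hH.biUnion_smul_eq _ _
  simp only [SData.lhs, hg, hH.evalBExpr_singleton, hsumSet_singleton hH.add_eq]

theorem rhs_eq (hH : H.IsTrivial) {n : ℕ} (d : SData H n) :
    d.rhs = {∑ i, (d.f (d.σ i)).lieEval fun j =>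
      (∑ k, ∏ r, d.lam (d.σ i) (d.σi (d.σ i) j) k r) • d.h (d.σ i) (d.σi (d.σ i) j)} := by
  have hg : ∀ i, d.g' i = fun j =>
      {(∑ k, ∏ r, d.lam (d.σ i) (d.σi (d.σ i) j) k r) • d.h (d.σ i) (d.σi (d.σ i) j)} :=
    fun i => funext fun j => by rw [SData.g', hH.A_eq, Set.biUnion_singleton, hH.smul_eq]
  simp only [SData.rhs, hg, hH.evalBExpr_singleton, hsumSet_singleton hH.add_eq]

section OfBrackets

variable (n : ℕ) (e : L) {N : ℕ} (a b : Fin N → L)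

theorem lhs_ofBrackets (hH : H.IsTrivial) (ha : ∀ i, a i ∈ H.derivedSet (n - 1))
    (hb : ∀ i, b i ∈ H.derivedSet (n - 1)) :
    (SData.ofBrackets H n e a b ha hb).lhs = {e + ∑ i, ⁅a i, b i⁆} := by
  rw [hH.lhs_eq, Fin.sum_univ_succ]
  simp [BExpr.lieEval]

theorem rhs_ofBrackets (hH : H.IsTrivial) (ha : ∀ i, a i ∈ H.derivedSet (n - 1))
    (hb : ∀ i, b i ∈ H.derivedSet (n - 1)) :
    (SData.ofBrackets H n e a b ha hb).rhs = {e + ∑ i, ⁅b i, a i⁆} := by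
  rw [hH.rhs_eq, Fin.sum_univ_succ]
  simp [BExpr.lieEval]

theorem sRel_add_sub (hH : H.IsTrivial) (ha : ∀ i, a i ∈ H.derivedSet (n - 1))
    (hb : ∀ i, b i ∈ H.derivedSet (n - 1)) :
    H.SRel n (e + ∑ i, ⁅a i, b i⁆) (e - ∑ i, ⁅a i, b i⁆) := by
  refine ⟨SData.ofBrackets H n e a b ha hb, ?_, ?_⟩
  · rw [hH.lhs_ofBrackets]
    exact Set.mem_singleton _
  · rw [hH.rhs_ofBrackets, sub_eq_add_neg, ← Finset.sum_neg_distrib]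
    simp only [lie_skew, Set.mem_singleton]

end OfBrackets

theorem sRel_of_perfect (hH : H.IsTrivial) (h2 : (2 : K) ≠ 0)
    (hperfect : LieAlgebra.derivedSeries K L 1 = ⊤) (n : ℕ) (x y : L) : H.SRel n x y := by
  obtain ⟨N, a, b, ha, hb, hz⟩ := hH.exists_sum_lie_eq hperfect (n - 1) ((2 : K)⁻¹ • (x - y))
  convert hH.sRel_add_sub n ((2 : K)⁻¹ • (x + y)) a b ha hb using 1 <;> rw [hz] <;>
    match_scalars <;> field_simp <;> ring

end IsTrivial

end LieHyperalgebra

theorem LieHyperalgebra.perfect_SRel_top_general {K L : Type*} [Field K] [LieRing L]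
    [LieAlgebra K L] (hcharK : (2 : K) ≠ 0) (H : LieHyperalgebra K L)
    (hadd : ∀ x y : L, H.add x y = {x + y})
    (hsmul : ∀ (a : K) (x : L), H.smul a x = {a • x})
    (hbr : ∀ x y : L, H.bracket x y = {⁅x, y⁆})
    (hfadd : ∀ a b : K, H.fadd a b = {a + b})
    (hfmul : ∀ a b : K, H.fmul a b = {a * b})
    (hperfect : LieAlgebra.derivedSeries K L 1 = ⊤) :
    (∀ x y : L, H.LRel x y ↔ x = y) ∧
    (∀ n : ℕ, 1 ≤ n → ∀ x y : L, Relation.TransGen (H.SRel n) x y) ∧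
    (∀ x y : L, H.SInt x y) := by
  have hH : H.IsTrivial := ⟨hadd, hsmul, hbr, hfadd, hfmul⟩
  have hS : ∀ n x y, H.SRel n x y := hH.sRel_of_perfect hcharK hperfect
  exact ⟨fun _ _ => hH.lRel_iff, fun n _ x y => .single (hS n x y),
    fun x y n _ => .single (hS n x y)⟩

/-- Let `L` be a perfect Lie algebra over a field `K` of characteristic `≠ 2`, viewed as
a trivial Lie hyperalgebra (all hyperoperations are singletons).  Then the fundamental
relation `ℒ` is the diagonal (so `L/ℒ ≅ L`), while `𝒮ₙ* = L × L` for every `n ≥ 1`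
(so `L/𝒮ₙ* = 0`), and consequently `𝒮 = ⋂ₙ 𝒮ₙ* = L × L` and `L/𝒮 = 0`. -/
theorem LieHyperalgebra.perfect_SRel_top {K L : Type*} [Field K] [LieRing L]
    [LieAlgebra K L] (hcharK : (2 : K) ≠ 0) (H : LieHyperalgebra K L)
    (hadd : ∀ x y : L, H.add x y = {x + y})
    (hsmul : ∀ (a : K) (x : L), H.smul a x = {a • x})
    (hbr : ∀ x y : L, H.bracket x y = {⁅x, y⁆})
    (hfadd : ∀ a b : K, H.fadd a b = {a + b})
    (hfmul : ∀ a b : K, H.fmul a b = {a * b})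
    (hz : H.zero = 0) (hfz : H.fzero = 0) (hfo : H.fone = 1)
    (hperfect : LieAlgebra.derivedSeries K L 1 = ⊤) :
    (∀ x y : L, H.LRel x y ↔ x = y) ∧
    (∀ n : ℕ, 1 ≤ n → ∀ x y : L, Relation.TransGen (H.SRel n) x y) ∧
    (∀ x y : L, H.SInt x y) :=
  LieHyperalgebra.perfect_SRel_top_general hcharK H hadd hsmul hbr hfadd hfmul hperfect
end

section
/- Let L be a Lie hyperalgebra, K ⊆ L nonempty, and n ≥ 1. Then the following are equivalent: (i) K is an S_n-part of L; (ii) for all x, y ∈ L, x ∈ K and x S_n y imply y ∈ K; (iii) for all x, y ∈ L, x ∈ K and x S_n* y imply y ∈ K. -/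
/-- A nonempty subset `K` of a Lie hyperalgebra is an `𝒮ₙ`-part if whenever a sum of
hyperbracket-function expressions `Σ ℓᵢ` meets `K`, every admissibly permuted version
`Σ ℓ'ᵢ` is contained in `K`. -/
def LieHyperalgebra.IsSnPart {F L : Type*} (H : LieHyperalgebra F L) (n : ℕ)
    (K : Set L) : Prop :=
  ∀ d : LieHyperalgebra.SData H n, (d.lhs ∩ K).Nonempty → d.rhs ⊆ K

theorem Relation.transGen_invariant_iff {α : Type*} {r : α → α → Prop} {K : Set α} :
    (∀ x y, x ∈ K → r x y → y ∈ K) ↔ ∀ x y, x ∈ K → Relation.TransGen r x y → y ∈ K := by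
  refine ⟨fun hK x y hx hxy => ?_, fun hK x y hx hxy => hK x y hx (.single hxy)⟩
  induction hxy with
  | single h => exact hK _ _ hx h
  | tail _ h ih => exact hK _ _ ih h

namespace LieHyperalgebra

theorem isSnPart_iff_forall_sRel {F L : Type*} (H : LieHyperalgebra F L) (n : ℕ) (K : Set L) :
    H.IsSnPart n K ↔ ∀ x y, x ∈ K → H.SRel n x y → y ∈ K :=
  ⟨fun hK _ _ hx ⟨d, hxd, hyd⟩ => hK d ⟨_, hxd, hx⟩ hyd,
    fun hK d ⟨x, hxd, hx⟩ _ hyd => hK x _ hx ⟨d, hxd, hyd⟩⟩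

end LieHyperalgebra

theorem LieHyperalgebra.isSnPart_iff_general {F L : Type*} (H : LieHyperalgebra F L) (n : ℕ)
    (K : Set L) :
    (H.IsSnPart n K ↔ ∀ x y : L, x ∈ K → H.SRel n x y → y ∈ K) ∧
    ((∀ x y : L, x ∈ K → H.SRel n x y → y ∈ K) ↔
      ∀ x y : L, x ∈ K → Relation.TransGen (H.SRel n) x y → y ∈ K) :=
  ⟨H.isSnPart_iff_forall_sRel n K, Relation.transGen_invariant_iff⟩

/-- For a nonempty subset `K` of a Lie hyperalgebra `L` and `n ≥ 1`, the following are
equivalent: (i) `K` is an `𝒮ₙ`-part of `L`; (ii) `x ∈ K` and `x 𝒮ₙ y` imply `y ∈ K`;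
(iii) `x ∈ K` and `x 𝒮ₙ* y` imply `y ∈ K`. -/
theorem LieHyperalgebra.isSnPart_iff {F L : Type*} (H : LieHyperalgebra F L) (n : ℕ)
    (hn : 1 ≤ n) (K : Set L) (hK : K.Nonempty) :
    (H.IsSnPart n K ↔ ∀ x y : L, x ∈ K → H.SRel n x y → y ∈ K) ∧
    ((∀ x y : L, x ∈ K → H.SRel n x y → y ∈ K) ↔
      ∀ x y : L, x ∈ K → Relation.TransGen (H.SRel n) x y → y ∈ K) :=
  LieHyperalgebra.isSnPart_iff_general H n K
end

section
/- Let L be a Lie hyperalgebra and n ≥ 1. Define P(x) = {y ∈ L : x S_n y} for x ∈ L. Then the following are equivalent: (i) S_n is transitive; (ii) S_n*(x) = P(x) for every x ∈ L; (iii) P(x) is an S_n-part of L for every x ∈ L. -/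
/-- `P(x) = {y : x 𝒮ₙ y}`. -/
def LieHyperalgebra.P {F L : Type*} (H : LieHyperalgebra F L) (n : ℕ) (x : L) : Set L :=
  {y | H.SRel n x y}

theorem Relation.trans_iff_forall_transGen_iff {α : Type*} (r : α → α → Prop) :
    (∀ x y z, r x y → r y z → r x z) ↔ ∀ x y, Relation.TransGen r x y ↔ r x y := by
  constructor
  · intro trans
    have : IsTrans α r := ⟨trans⟩
    simp only [Relation.transGen_eq_self, implies_true]
  · intro h x y z hxy hyz
    exact (h x z).1 ((Relation.TransGen.single hxy).tail hyz)

theorem LieHyperalgebra.isSnPart_P_iff {F L : Type*} (H : LieHyperalgebra F L) (n : ℕ)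
    (x : L) : H.IsSnPart n (H.P n x) ↔ ∀ y z, H.SRel n x y → H.SRel n y z → H.SRel n x z := by
  constructor
  · rintro hPart y z hxy ⟨d, hy, hz⟩
    exact hPart d ⟨y, hy, hxy⟩ hz
  · rintro trans d ⟨y, hy, hxy⟩ z hz
    exact trans y z hxy ⟨d, hy, hz⟩

theorem LieHyperalgebra.SRel_transitive_iff_general {F L : Type*} (H : LieHyperalgebra F L)
    (n : ℕ) :
    ((∀ x y z : L, H.SRel n x y → H.SRel n y z → H.SRel n x z) ↔
      ∀ x y : L, Relation.TransGen (H.SRel n) x y ↔ y ∈ H.P n x) ∧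
    ((∀ x y : L, Relation.TransGen (H.SRel n) x y ↔ y ∈ H.P n x) ↔
      ∀ x : L, H.IsSnPart n (H.P n x)) := by
  have transitive_iff := Relation.trans_iff_forall_transGen_iff (H.SRel n)
  exact ⟨transitive_iff, transitive_iff.symm.trans
    (forall_congr' fun x => (H.isSnPart_P_iff n x).symm)⟩

/-- For a Lie hyperalgebra `L` and `n ≥ 1`, the following are equivalent:
(i) `𝒮ₙ` is transitive; (ii) `𝒮ₙ*(x) = P(x)` for every `x`; (iii) `P(x)` is an
`𝒮ₙ`-part of `L` for every `x`. -/
theorem LieHyperalgebra.SRel_transitive_iff {F L : Type*} (H : LieHyperalgebra F L)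
    (n : ℕ) (hn : 1 ≤ n) :
    ((∀ x y z : L, H.SRel n x y → H.SRel n y z → H.SRel n x z) ↔
      ∀ x y : L, Relation.TransGen (H.SRel n) x y ↔ y ∈ H.P n x) ∧
    ((∀ x y : L, Relation.TransGen (H.SRel n) x y ↔ y ∈ H.P n x) ↔
      ∀ x : L, H.IsSnPart n (H.P n x)) :=
  LieHyperalgebra.SRel_transitive_iff_general H n
end
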